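/- arXiv:1410.3974 — 3 statements merged into one kernel-verified Lean document; each statement's English description precedes it below -/
import Mathlib

section
/- In a Z_2-graded associative algebra A over a commutative ring K with deformed bracket [a,b]_u = ab - (-1)^{|a||b|} u·ba, for all homogeneous a,b,c and invertible scalars u,v,x one has [[a,b]_u, c]_v = [a, [b,c]_x]_{uv/x} + (-1)^{|b||c|} x·[[a,c]_{v/x}, b]_{u/x}. -/
/-!
Each super-bracket is a plain twisted commutator `a * b - r • (b * a)` with `r = ε(p, q) * u`,
where `ε(p, q) = (-1)^{pq}`. Expanding into the six monomials in `a, b, c` shows that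
`[[a,b]_{km}, c]_{kw} = [a, [b,c]_k]_{kmw} + k [[a,c]_w, b]_m` in any algebra. The theorem is
this identity for `k = ε(b,c) x`, `m = ε(a+c,b) u / x`, `w = ε(a,c) v / x`: the scalars match
because `ε` is bimultiplicative, symmetric, and squares to `1`.
-/

/-- The deformed super-bracket `[a,b]_u = ab - (-1)^{|a||b|} u · ba`, where the
parities `p`, `q` of the homogeneous elements `a`, `b` are supplied explicitly. -/
def superBracket {K A : Type*} [CommRing K] [Ring A] [Algebra K A]
    (u : K) (p q : ZMod 2) (a b : A) : A :=
  a * b - ((-1 : K) ^ (p.val * q.val) * u) • (b * a)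

def qCommutator {K A : Type*} [CommRing K] [Ring A] [Algebra K A] (r : K) (a b : A) : A :=
  a * b - r • (b * a)

theorem qCommutator_jacobi {K A : Type*} [CommRing K] [Ring A] [Algebra K A]
    (k m w : K) (a b c : A) :
    qCommutator (k * w) (qCommutator (k * m) a b) c
      = qCommutator (k * m * w) a (qCommutator k b c)
        + k • qCommutator m (qCommutator w a c) b := by
  simp only [qCommutator, mul_sub, sub_mul, smul_sub, smul_mul_assoc, mul_smul_comm, smul_smul,
    mul_assoc]
  module

def paritySign (K : Type*) [Ring K] (p q : ZMod 2) : K :=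
  (-1) ^ (p.val * q.val)

section paritySign

variable {K : Type*} [Ring K]

theorem paritySign_add_left (p q r : ZMod 2) :
    paritySign K (p + q) r = paritySign K p r * paritySign K q r := by
  rw [paritySign, paritySign, paritySign, ← pow_add, neg_one_pow_eq_pow_mod_two,
    neg_one_pow_eq_pow_mod_two (_ + _)]
  congr 1
  revert p q r
  decide

theorem paritySign_comm (p q : ZMod 2) : paritySign K p q = paritySign K q p := by
  rw [paritySign, paritySign, mul_comm]

theorem paritySign_add_right (p q r : ZMod 2) :
    paritySign K p (q + r) = paritySign K p q * paritySign K p r := by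
  rw [paritySign_comm, paritySign_add_left, paritySign_comm q, paritySign_comm r]

theorem paritySign_mul_self (p q : ZMod 2) : paritySign K p q * paritySign K p q = 1 := by
  rw [paritySign, ← pow_add]
  exact Even.neg_one_pow ⟨_, rfl⟩

end paritySign

theorem superBracket_eq_qCommutator {K A : Type*} [CommRing K] [Ring A] [Algebra K A]
    (u : K) (p q : ZMod 2) (a b : A) :
    superBracket u p q a b = qCommutator (paritySign K p q * u) a b :=
  rfl

theorem stmt_3_general (K A : Type*) [CommRing K] [Ring A] [Algebra K A]
    (pa pb pc : ZMod 2) (a b c : A)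
    (u v x : Kˣ) :
    superBracket (v : K) (pa + pb) pc (superBracket (u : K) pa pb a b) c
      = superBracket ((u : K) * (v : K) * ((x⁻¹ : Kˣ) : K)) pa (pb + pc) a
          (superBracket (x : K) pb pc b c)
        + ((-1 : K) ^ (pb.val * pc.val) * (x : K)) •
            superBracket ((u : K) * ((x⁻¹ : Kˣ) : K)) (pa + pc) pb
              (superBracket ((v : K) * ((x⁻¹ : Kˣ) : K)) pa pc a c) b := by
  have hx : (x : K) * ((x⁻¹ : Kˣ) : K) = 1 := x.mul_inv
  have hε := paritySign_mul_self (K := K) pb pc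
  simp only [superBracket_eq_qCommutator]
  rw [paritySign_add_left, paritySign_add_right, paritySign_add_left, paritySign_comm pc pb]
  change _ = _ + (paritySign K pb pc * x) • _
  have hk : paritySign K pa pc * paritySign K pb pc * (v : K)
      = paritySign K pb pc * x * (paritySign K pa pc * (v * (x⁻¹ : Kˣ))) := by
    grind
  have hm : paritySign K pa pb * (u : K)
      = paritySign K pb pc * x
        * (paritySign K pa pb * paritySign K pb pc * (u * (x⁻¹ : Kˣ))) := by
    grind
  have hkmw : paritySign K pa pb * paritySign K pa pc * (u * v * (x⁻¹ : Kˣ) : K)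
      = paritySign K pb pc * x * (paritySign K pa pb * paritySign K pb pc * (u * (x⁻¹ : Kˣ)))
        * (paritySign K pa pc * (v * (x⁻¹ : Kˣ))) := by
    grind
  rw [hk, hm, hkmw]
  exact qCommutator_jacobi _ _ _ a b c

theorem stmt_3 (K A : Type*) [CommRing K] [Ring A] [Algebra K A]
    (𝒜 : ZMod 2 → Submodule K A) [GradedAlgebra 𝒜]
    (pa pb pc : ZMod 2) (a b c : A)
    (ha : a ∈ 𝒜 pa) (hb : b ∈ 𝒜 pb) (hc : c ∈ 𝒜 pc)
    (u v x : Kˣ) :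
    superBracket (v : K) (pa + pb) pc (superBracket (u : K) pa pb a b) c
      = superBracket ((u : K) * (v : K) * ((x⁻¹ : Kˣ) : K)) pa (pb + pc) a
          (superBracket (x : K) pb pc b c)
        + ((-1 : K) ^ (pb.val * pc.val) * (x : K)) •
            superBracket ((u : K) * ((x⁻¹ : Kˣ) : K)) (pa + pc) pb
              (superBracket ((v : K) * ((x⁻¹ : Kˣ) : K)) pa pc a c) b :=
  stmt_3_general K A pa pb pc a b c u v x
end

section
/- Let A be an associative algebra over a field K, let q ∈ K be invertible, and let x(m), y(n) ∈ A for m, n ∈ Z satisfy, for all m, n ∈ Z, the relation [x(m+1), y(n)]_{q^{-1}} + [y(n+1), x(m)]_{q^{-1}} = 0, where [a,b]_u := ab - u·ba. Then for all m, n ∈ Z and all integers k ≥ 0: [x(m), y(n)]_q = q^k [x(m+k), y(n-k)]_q + Σ_{s=1}^{k} q^{s-1}(q^2 - 1)· y(n-s)·x(m+s). -/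
/-- The deformed bracket `[a,b]_u = ab - u·(ba)` (all elements even). -/
def qBracket {K A : Type*} [CommRing K] [Ring A] [Algebra K A]
    (u : K) (a b : A) : A := a * b - u • (b * a)

private lemma step_aux (K A : Type*) [Field K] [Ring A] [Algebra K A] (q : Kˣ)
    (x y : ℤ → A)
    (hrel : ∀ m n : ℤ,
      qBracket (((q⁻¹ : Kˣ) : K)) (x (m + 1)) (y n)
        + qBracket (((q⁻¹ : Kˣ) : K)) (y (n + 1)) (x m) = 0)
    (a b : ℤ) :
    qBracket (q : K) (x a) (y b)
      = (q : K) • qBracket (q : K) (x (a + 1)) (y (b - 1))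
        + ((q : K) ^ 2 - 1) • (y (b - 1) * x (a + 1)) := by
  have h := hrel a (b - 1)
  rw [show (b - 1 + 1 : ℤ) = b by ring] at h
  unfold qBracket at h ⊢
  have hyx : (y b * x a : A)
      = ((q⁻¹ : Kˣ) : K) • (x a * y b) - x (a + 1) * y (b - 1)
        + ((q⁻¹ : Kˣ) : K) • (y (b - 1) * x (a + 1)) := by
    linear_combination (norm := module) h
  rw [hyx, smul_add, smul_sub, smul_smul, smul_smul, Units.mul_inv, one_smul, one_smul]
  module

theorem stmt_12 (K A : Type*) [Field K] [Ring A] [Algebra K A] (q : Kˣ)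
    (x y : ℤ → A)
    (hrel : ∀ m n : ℤ,
      qBracket (((q⁻¹ : Kˣ) : K)) (x (m + 1)) (y n)
        + qBracket (((q⁻¹ : Kˣ) : K)) (y (n + 1)) (x m) = 0) :
    ∀ (m n : ℤ) (k : ℕ),
      qBracket (q : K) (x m) (y n)
        = ((q : K) ^ k) • qBracket (q : K) (x (m + k)) (y (n - k))
          + ∑ s ∈ Finset.Icc 1 k,
              ((q : K) ^ (s - 1) * ((q : K) ^ 2 - 1)) • (y (n - s) * x (m + s)) := by
  intro m n k
  induction k with
  | zero => simp
  | succ k ih =>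
    rw [ih]
    have hs := step_aux K A q x y hrel (m + k) (n - k)
    rw [Finset.sum_Icc_succ_top (by omega : 1 ≤ k + 1)]
    have e1 : (m + (k : ℤ) + 1) = m + ((k : ℕ) + 1 : ℕ) := by push_cast; ring
    have e2 : (n - (k : ℤ) - 1) = n - ((k : ℕ) + 1 : ℕ) := by push_cast; ring
    rw [e1, e2] at hs
    rw [hs, smul_add, smul_smul, smul_smul, ← pow_succ]
    have e3 : (k + 1 - 1 : ℕ) = k := rfl
    rw [e3]
    abel
end

section
/- Let A be an associative algebra over a field K, let q ∈ K be invertible, and let x(m), y(n) ∈ A for m, n ∈ Z satisfy, for all m, n ∈ Z, the relation [x(m+1), y(n)]_{q^{-1}} + [y(n+1), x(m)]_{q^{-1}} = 0, where [a,b]_u := ab - u·ba. Then for all m, n ∈ Z and all integers k ≥ 0: [x(m), y(n)]_q = q^{-k} [x(m-k), y(n+k)]_q - Σ_{s=0}^{k-1} q^{-s-1}(q^2 - 1)· y(n+s)·x(m-s). -/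
theorem stmt_13 (K A : Type*) [Field K] [Ring A] [Algebra K A] (q : Kˣ)
    (x y : ℤ → A)
    (hrel : ∀ m n : ℤ,
      qBracket (((q⁻¹ : Kˣ) : K)) (x (m + 1)) (y n)
        + qBracket (((q⁻¹ : Kˣ) : K)) (y (n + 1)) (x m) = 0) :
    ∀ (m n : ℤ) (k : ℕ),
      qBracket (q : K) (x m) (y n)
        = (((q⁻¹ : Kˣ) : K) ^ k) • qBracket (q : K) (x (m - k)) (y (n + k))
          - ∑ s ∈ Finset.range k,
              (((q⁻¹ : Kˣ) : K) ^ (s + 1) * ((q : K) ^ 2 - 1)) • (y (n + s) * x (m - s)) := by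
  set u : K := ((q⁻¹ : Kˣ) : K) with hudef
  have hu : u * (q : K) = 1 := Units.inv_mul q
  have step : ∀ m n : ℤ,
      qBracket (q : K) (x m) (y n)
        = u • qBracket (q : K) (x (m - 1)) (y (n + 1))
          - (u * ((q : K) ^ 2 - 1)) • (y n * x m) := by
    intro m n
    have h := hrel (m - 1) n
    rw [sub_add_cancel] at h
    simp only [qBracket] at h ⊢
    have hx : x m * y n = u • (y n * x m) - y (n + 1) * x (m - 1)
        + u • (x (m - 1) * y (n + 1)) := by
      rw [← sub_eq_zero, ← h]; module
    rw [hx]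
    match_scalars <;> simp only [hudef, Units.val_inv_eq_inv_val] <;> (try field_simp) <;> (try ring)
  intro m n k
  induction k with
  | zero => simp
  | succ k ih =>
    have e1 : m - ((k : ℤ) + 1) = m - (k : ℤ) - 1 := by ring
    have e2 : n + ((k : ℤ) + 1) = n + (k : ℤ) + 1 := by ring
    rw [Finset.sum_range_succ, ih, step (m - k) (n + k)]
    push_cast
    rw [e1, e2]
    module
end
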